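/- arXiv:1811.02179 — 3 statements merged into one kernel-verified Lean document; each statement's English description precedes it below -/
import Mathlib

section
/- Let a, b > 0 and set r_b := (-1 + sqrt(1 + 3/b))/3. Let T > 0 and let X : [0,T] → ℝ be a continuous function with X(t) ≥ 0 for all t ∈ [0,T], satisfying X(t) ≤ a + b·X(t)^2 + b·X(t)^3 for every t ∈ [0,T]. If a < r_b·(2 - b·r_b)/3 and X(0) ≤ r_b, then X(t) ≤ 2a for every t ∈ [0,T]. -/
open Real Set

/-- Bootstrap lemma (Lemma 5.2): if a nonnegative continuous function `X` on `[0,T]`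
satisfies the cubic inequality `X ≤ a + b X² + b X³`, with `a < r_b (2 - b r_b)/3` and
`X 0 ≤ r_b` where `r_b = (-1 + √(1 + 3/b))/3`, then `X ≤ 2a` on `[0,T]`. -/
theorem bootstrap_lemma (a b T : ℝ) (ha : 0 < a) (hb : 0 < b) (hT : 0 < T)
    (X : ℝ → ℝ) (hXcont : ContinuousOn X (Set.Icc 0 T))
    (hXnonneg : ∀ t ∈ Set.Icc 0 T, 0 ≤ X t)
    (hXineq : ∀ t ∈ Set.Icc 0 T, X t ≤ a + b * X t ^ 2 + b * X t ^ 3)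
    (rb : ℝ) (hrb : rb = (-1 + Real.sqrt (1 + 3 / b)) / 3)
    (ha' : a < rb * (2 - b * rb) / 3) (hX0 : X 0 ≤ rb) :
    ∀ t ∈ Set.Icc 0 T, X t ≤ 2 * a := by
  have hsq : (3 * rb + 1) = Real.sqrt (1 + 3 / b) := by rw [hrb]; ring
  have h2 : (3 * rb + 1) ^ 2 = 1 + 3 / b := by
    rw [hsq]; exact Real.sq_sqrt (by positivity)
  have hkey : b * (3 * rb ^ 2 + 2 * rb) = 1 := by
    have h3 : (3 * rb + 1) ^ 2 * b = (1 + 3 / b) * b := by rw [h2]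
    have h4 : (1 + 3 / b) * b = b + 3 := by field_simp
    nlinarith [h3, h4]
  have hrbpos : 0 < rb := by
    have h1 : (1:ℝ) < Real.sqrt (1 + 3 / b) := by
      have : Real.sqrt 1 < Real.sqrt (1 + 3 / b) :=
        Real.sqrt_lt_sqrt (by norm_num) (by have := div_pos (by norm_num : (0:ℝ) < 3) hb; linarith)
      simpa using this
    rw [hrb]; linarith
  have hkey2 : b * (3 * rb ^ 3 + 2 * rb ^ 2) = rb := by
    rw [show 3 * rb ^ 3 + 2 * rb ^ 2 = (3 * rb ^ 2 + 2 * rb) * rb by ring,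
      ← mul_assoc, hkey, one_mul]
  have hne : ∀ t ∈ Set.Icc 0 T, X t ≠ rb := by
    intro t ht heq
    have h1 := hXineq t ht
    rw [heq] at h1
    nlinarith [hkey2, h1, ha']
  have hlt : ∀ t ∈ Set.Icc 0 T, X t < rb := by
    intro t ht
    by_contra h
    push_neg at h
    have h0T : (0:ℝ) ∈ Set.Icc 0 T := ⟨le_refl 0, hT.le⟩
    have hX0' : X 0 < rb := lt_of_le_of_ne hX0 (hne 0 h0T)
    have hsub : Set.Icc (0:ℝ) t ⊆ Set.Icc 0 T := Set.Icc_subset_Icc le_rfl ht.2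
    have hiv := intermediate_value_Icc ht.1 (hXcont.mono hsub)
    have hmem : rb ∈ Set.Icc (X 0) (X t) := ⟨hX0'.le, h⟩
    obtain ⟨s, hs', hXs⟩ := hiv hmem
    exact hne s (hsub hs') hXs
  intro t ht
  have hx := hXineq t ht
  have hxn := hXnonneg t ht
  have hxr := (hlt t ht).le
  nlinarith [hkey, hkey2, mul_nonneg (mul_nonneg hb.le hxn) (sub_nonneg.mpr hxr),
    mul_nonneg (mul_nonneg (mul_nonneg hb.le hxn) hxn) (sub_nonneg.mpr hxr),
    mul_nonneg (mul_nonneg hb.le hxn) (mul_nonneg (sub_nonneg.mpr hxr) (by linarith : 0 <= rb + X t))]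
end

section
/- Let a, b > 0 and set r_b := (-1 + sqrt(1 + 3/b))/3. Suppose x₀ is a real number with 0 < x₀ < r_b satisfying b·x₀^3 + b·x₀^2 - x₀ + a = 0. Then a > x₀/2. -/
open Real

/-- Root estimate for the cubic `b x³ + b x² - x + a`: if `0 < x₀ < r_b` is a root, where
`r_b = (-1 + √(1 + 3/b))/3`, then `a > x₀ / 2`. -/
theorem cubic_root_estimate (a b : ℝ) (ha : 0 < a) (hb : 0 < b)
    (rb : ℝ) (hrb : rb = (-1 + Real.sqrt (1 + 3 / b)) / 3)
    (x₀ : ℝ) (hx₀pos : 0 < x₀) (hx₀lt : x₀ < rb)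
    (hroot : b * x₀ ^ 3 + b * x₀ ^ 2 - x₀ + a = 0) :
    a > x₀ / 2 := by
  set s := Real.sqrt (1 + 3 / b) with hs
  have hs0 : 0 ≤ s := Real.sqrt_nonneg _
  have hs2 : s ^ 2 = 1 + 3 / b := Real.sq_sqrt (by positivity)
  have hbs : b * s ^ 2 = b + 3 := by
    rw [hs2]; field_simp
  -- key: 3*b*rb^2 + 2*b*rb = 1
  have hkey : 3 * b * rb ^ 2 + 2 * b * rb = 1 := by
    rw [hrb]; ring_nf; nlinarith [hbs]
  have hrbpos : 0 < rb := lt_trans hx₀pos hx₀lt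
  -- b*x₀² + b*x₀ < 1/2
  have h1 : b * x₀ ^ 2 + b * x₀ < 1 / 2 := by
    nlinarith [mul_pos hb hx₀pos, sq_nonneg rb, mul_pos hb (mul_pos hrbpos hrbpos),
      mul_pos (mul_pos hb hx₀pos) hx₀pos]
  nlinarith [mul_pos hb hx₀pos, mul_pos hx₀pos hx₀pos]
end

section
/- Let E be a Banach space, 0 < T < ∞, 1 ≤ p < ∞, γ > 0, and let t satisfy 0 < t ≤ T. Let φ : ℝ → ℝ be a smooth function with φ(s) = 1 for s ≤ 0, φ(s) = 0 for s ≥ 1, and 0 ≤ φ ≤ 1, and set φ_t(s) := φ(s - t). Then for any h ∈ L^p((0,T); E), ( ∫_ℝ e^{pγs} ‖φ_t(s) · E_{(t)}h(s)‖_E^p ds )^{1/p} ≤ (1 + e^{2pγ})^{1/p} · ( ∫_0^t e^{pγs} ‖h(s)‖_E^p ds )^{1/p}. -/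
open Real Set MeasureTheory

/-- The time-reflection extension operator `E_{(t)}`: `E_{(t)}h(s) = h(s)` on `(0,t)`,
`h(2t - s)` on `(t, 2t)`, and `0` otherwise. -/
noncomputable def extOp {E : Type*} [NormedAddCommGroup E] (t : ℝ) (h : ℝ → E) : ℝ → E :=
  fun s => if s ∈ Set.Ioo 0 t then h s
    else if s ∈ Set.Ioo t (2 * t) then h (2 * t - s) else 0

/-- For the smooth cut-off `φ_t(s) = φ(s - t)` and `h ∈ L^p((0,T);E)`,
`(∫ℝ e^{pγs} ‖φ_t(s) E_{(t)}h(s)‖^p ds)^{1/p}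
  ≤ (1 + e^{2pγ})^{1/p} (∫_0^t e^{pγs} ‖h(s)‖^p ds)^{1/p}`. -/
theorem cutoff_extOp_weighted_Lp_bound {E : Type*} [NormedAddCommGroup E] [NormedSpace ℝ E]
    (T p γ t : ℝ) (hT : 0 < T) (hp : 1 ≤ p) (hγ : 0 < γ) (ht : 0 < t) (htT : t ≤ T)
    (φ : ℝ → ℝ) (hφsmooth : ContDiff ℝ (⊤ : ℕ∞) φ)
    (hφone : ∀ s : ℝ, s ≤ 0 → φ s = 1) (hφzero : ∀ s : ℝ, 1 ≤ s → φ s = 0)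
    (hφrange : ∀ s : ℝ, φ s ∈ Set.Icc (0 : ℝ) 1)
    (h : ℝ → E)
    (hh : MemLp h (ENNReal.ofReal p) (volume.restrict (Set.Ioo 0 T))) :
    (∫ s : ℝ, Real.exp (p * γ * s) * ‖φ (s - t) • extOp t h s‖ ^ p) ^ (1 / p) ≤
      (1 + Real.exp (2 * p * γ)) ^ (1 / p) *
        (∫ s in Set.Ioo (0 : ℝ) t, Real.exp (p * γ * s) * ‖h s‖ ^ p) ^ (1 / p) := by
  have hp0 : 0 < p := lt_of_lt_of_le one_pos hp
  have hpγ : 0 < p * γ := mul_pos hp0 hγ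
  have hmp : MeasurePreserving (fun s : ℝ => 2 * t - s) volume volume :=
    Measure.measurePreserving_sub_left volume (2 * t)
  have hemb : MeasurableEmbedding (fun s : ℝ => 2 * t - s) :=
    (MeasurableEquiv.subLeft (2 * t)).measurableEmbedding
  set f : ℝ → ℝ := fun s => Real.exp (p * γ * s) * ‖φ (s - t) • extOp t h s‖ ^ p with hfdef
  set g : ℝ → ℝ := fun s => Real.exp (p * γ * s) * ‖h s‖ ^ p with hgdef
  have hfnn : ∀ s, 0 ≤ f s := fun s =>
    mul_nonneg (Real.exp_pos _).le (Real.rpow_nonneg (norm_nonneg _) _)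
  have hgnn : ∀ s, 0 ≤ g s := fun s =>
    mul_nonneg (Real.exp_pos _).le (Real.rpow_nonneg (norm_nonneg _) _)
  -- measurability and integrability facts about `h`
  have hmeas : AEStronglyMeasurable h (volume.restrict (Set.Ioo 0 t)) :=
    hh.aestronglyMeasurable.mono_measure
      (Measure.restrict_mono (Set.Ioo_subset_Ioo le_rfl htT) le_rfl)
  have hnp : IntegrableOn (fun s => ‖h s‖ ^ p) (Set.Ioo 0 t) volume := by
    have h1 : IntegrableOn (fun s => ‖h s‖ ^ p) (Set.Ioo 0 T) volume := by
      have := hh.integrable_norm_rpow (ENNReal.ofReal_pos.mpr hp0).ne' ENNReal.ofReal_ne_top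
      rwa [ENNReal.toReal_ofReal hp0.le] at this
    exact h1.mono_set (Set.Ioo_subset_Ioo le_rfl htT)
  have hφc : Continuous fun s : ℝ => φ (s - t) :=
    hφsmooth.continuous.comp (continuous_id.sub continuous_const)
  have hexp : ∀ c : ℝ, Continuous fun s : ℝ => Real.exp (c * s) := fun c =>
    Real.continuous_exp.comp (continuous_const.mul continuous_id)
  have hgint : IntegrableOn g (Set.Ioo 0 t) volume := by
    apply Integrable.mono' (hnp.const_mul (Real.exp (p * γ * t)))
    · exact ((hexp (p * γ)).aestronglyMeasurable).mul
        ((Real.continuous_rpow_const hp0.le).comp_aestronglyMeasurable hmeas.norm)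
    · filter_upwards [ae_restrict_mem measurableSet_Ioo] with s hs
      rw [Real.norm_eq_abs, abs_of_nonneg (hgnn s)]
      exact mul_le_mul_of_nonneg_right
        (Real.exp_le_exp.2 (mul_le_mul_of_nonneg_left hs.2.le hpγ.le))
        (Real.rpow_nonneg (norm_nonneg _) _)
  -- values of `extOp`
  have hext1 : ∀ s ∈ Set.Ioo (0 : ℝ) t, extOp t h s = h s := by
    intro s hs; simp [extOp, hs]
  have hext2 : ∀ u ∈ Set.Ioo (0 : ℝ) t, extOp t h (2 * t - u) = h u := by
    intro u hu
    have h1 : (2 * t - u) ∉ Set.Ioo (0 : ℝ) t := by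
      intro hmem; have := hmem.2; linarith [hu.2]
    have h2 : (2 * t - u) ∈ Set.Ioo t (2 * t) := ⟨by linarith [hu.2], by linarith [hu.1]⟩
    have h3 : 2 * t - (2 * t - u) = u := by ring
    simp [extOp, h1, h2, h3]
  -- first piece : on (0,t)
  have hfle1 : ∀ s ∈ Set.Ioo (0 : ℝ) t, f s ≤ g s := by
    intro s hs
    have hnle : ‖φ (s - t) • extOp t h s‖ ≤ ‖h s‖ := by
      rw [hext1 s hs, norm_smul, Real.norm_eq_abs, abs_of_nonneg (hφrange _).1]
      exact mul_le_of_le_one_left (norm_nonneg _) (hφrange _).2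
    exact mul_le_mul_of_nonneg_left
      (Real.rpow_le_rpow (norm_nonneg _) hnle hp0.le) (Real.exp_pos _).le
  have hfeq1 : f =ᵐ[volume.restrict (Set.Ioo 0 t)]
      fun s => Real.exp (p * γ * s) * ‖φ (s - t) • h s‖ ^ p := by
    filter_upwards [ae_restrict_mem measurableSet_Ioo] with s hs
    simp only [hfdef, hext1 s hs]
  have hfm1 : AEStronglyMeasurable f (volume.restrict (Set.Ioo 0 t)) := by
    refine AEStronglyMeasurable.congr ?_ hfeq1.symm
    exact ((hexp (p * γ)).aestronglyMeasurable).mul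
      ((Real.continuous_rpow_const hp0.le).comp_aestronglyMeasurable
        (hφc.aestronglyMeasurable.smul hmeas).norm)
  have hfint1 : IntegrableOn f (Set.Ioo 0 t) volume := by
    apply Integrable.mono' hgint hfm1
    filter_upwards [ae_restrict_mem measurableSet_Ioo] with s hs
    rw [Real.norm_eq_abs, abs_of_nonneg (hfnn s)]
    exact hfle1 s hs
  -- second piece : reflected part
  set F2 : ℝ → ℝ := fun u => Real.exp (p * γ * (2 * t - u)) * ‖φ (t - u) • h u‖ ^ p with hF2def
  have hf2eq : Set.EqOn (fun u => f (2 * t - u)) F2 (Set.Ioo 0 t) := by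
    intro u hu
    have h3 : 2 * t - u - t = t - u := by ring
    simp only [hfdef, hF2def, hext2 u hu, h3]
  have hf2le : ∀ u ∈ Set.Ioo (0 : ℝ) t, F2 u ≤ Real.exp (2 * p * γ) * g u := by
    intro u hu
    by_cases hc : 1 ≤ t - u
    · have : F2 u = 0 := by
        simp [hF2def, hφzero _ hc, Real.zero_rpow hp0.ne']
      rw [this]
      exact mul_nonneg (Real.exp_pos _).le (hgnn u)
    · push_neg at hc
      have hA : Real.exp (p * γ * (2 * t - u)) ≤ Real.exp (2 * p * γ) * Real.exp (p * γ * u) := by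
        rw [← Real.exp_add]
        apply Real.exp_le_exp.2
        nlinarith [mul_nonneg hpγ.le (by linarith : (0:ℝ) ≤ 1 - (t - u))]
      have hB : ‖φ (t - u) • h u‖ ^ p ≤ ‖h u‖ ^ p := by
        apply Real.rpow_le_rpow (norm_nonneg _) ?_ hp0.le
        rw [norm_smul, Real.norm_eq_abs, abs_of_nonneg (hφrange _).1]
        exact mul_le_of_le_one_left (norm_nonneg _) (hφrange _).2
      calc F2 u ≤ (Real.exp (2 * p * γ) * Real.exp (p * γ * u)) * ‖h u‖ ^ p :=
            mul_le_mul hA hB (Real.rpow_nonneg (norm_nonneg _) _) (by positivity)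
        _ = Real.exp (2 * p * γ) * g u := by rw [hgdef]; ring
  have hF2m : AEStronglyMeasurable F2 (volume.restrict (Set.Ioo 0 t)) := by
    have hc2 : Continuous fun u : ℝ => Real.exp (p * γ * (2 * t - u)) :=
      Real.continuous_exp.comp (continuous_const.mul (continuous_const.sub continuous_id))
    have hφc2 : Continuous fun u : ℝ => φ (t - u) :=
      hφsmooth.continuous.comp (continuous_const.sub continuous_id)
    exact hc2.aestronglyMeasurable.mul
      ((Real.continuous_rpow_const hp0.le).comp_aestronglyMeasurable
        (hφc2.aestronglyMeasurable.smul hmeas).norm)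
  have hF2int : IntegrableOn F2 (Set.Ioo 0 t) volume := by
    apply Integrable.mono' (hgint.const_mul (Real.exp (2 * p * γ))) hF2m
    filter_upwards [ae_restrict_mem measurableSet_Ioo] with u hu
    rw [Real.norm_eq_abs, abs_of_nonneg
      (mul_nonneg (Real.exp_pos _).le (Real.rpow_nonneg (norm_nonneg _) _))]
    exact hf2le u hu
  have hf2int : IntegrableOn (fun u => f (2 * t - u)) (Set.Ioo 0 t) volume :=
    hF2int.congr_fun (fun u hu => (hf2eq hu).symm) measurableSet_Ioo
  have hpre : (fun s : ℝ => 2 * t - s) ⁻¹' (Set.Ioo t (2 * t)) = Set.Ioo 0 t := by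
    ext u
    simp only [Set.mem_preimage, Set.mem_Ioo]
    constructor
    · rintro ⟨a, b⟩; exact ⟨by linarith, by linarith⟩
    · rintro ⟨a, b⟩; exact ⟨by linarith, by linarith⟩
  have hintB : IntegrableOn f (Set.Ioo t (2 * t)) volume := by
    refine (hmp.integrableOn_comp_preimage hemb).mp ?_
    rw [hpre]
    exact hf2int
  have hB : ∫ x in Set.Ioo t (2 * t), f x = ∫ u in Set.Ioo (0 : ℝ) t, f (2 * t - u) := by
    rw [← hmp.setIntegral_preimage_emb hemb f (Set.Ioo t (2 * t)), hpre]
  -- support of f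
  have hsupp : ∀ s, s ∉ Set.Ioo (0 : ℝ) (2 * t) → f s = 0 := by
    intro s hs
    have h1 : s ∉ Set.Ioo (0 : ℝ) t := fun hmem => hs ⟨hmem.1, by linarith [hmem.2]⟩
    have h2 : s ∉ Set.Ioo t (2 * t) := fun hmem => hs ⟨by linarith [hmem.1], hmem.2⟩
    have hz : extOp t h s = 0 := by
      simp only [extOp]
      rw [if_neg h1, if_neg h2]
    simp [hfdef, hz, Real.zero_rpow hp0.ne']
  have hunion : Set.Ioo (0 : ℝ) (2 * t) = Set.Ioo 0 t ∪ Set.Ico t (2 * t) := by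
    ext s
    simp only [Set.mem_Ioo, Set.mem_union, Set.mem_Ico]
    constructor
    · rintro ⟨a, b⟩
      rcases lt_or_ge s t with hst | hst
      · exact Or.inl ⟨a, hst⟩
      · exact Or.inr ⟨hst, b⟩
    · rintro (⟨a, b⟩ | ⟨a, b⟩)
      · exact ⟨a, by linarith⟩
      · exact ⟨by linarith, b⟩
  have hdisj : Disjoint (Set.Ioo (0 : ℝ) t) (Set.Ico t (2 * t)) :=
    Set.disjoint_left.mpr fun x hx hx' => absurd hx.2 (not_lt.mpr hx'.1)
  have hIcoInt : IntegrableOn f (Set.Ico t (2 * t)) volume :=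
    (integrableOn_Ico_iff_integrableOn_Ioo).mpr hintB
  have hsplit : ∫ s, f s = (∫ s in Set.Ioo (0 : ℝ) t, f s) + ∫ s in Set.Ioo t (2 * t), f s := by
    rw [← setIntegral_eq_integral_of_forall_compl_eq_zero hsupp, hunion,
      setIntegral_union hdisj measurableSet_Ico hfint1 hIcoInt,
      integral_Ico_eq_integral_Ioo]
  have hrhsnn : 0 ≤ ∫ s in Set.Ioo (0 : ℝ) t, g s :=
    setIntegral_nonneg measurableSet_Ioo fun s _ => hgnn s
  have hineq : ∫ s, f s ≤ (1 + Real.exp (2 * p * γ)) * ∫ s in Set.Ioo (0 : ℝ) t, g s := by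
    rw [hsplit, hB]
    have h1 : ∫ s in Set.Ioo (0 : ℝ) t, f s ≤ ∫ s in Set.Ioo (0 : ℝ) t, g s :=
      setIntegral_mono_on hfint1 hgint measurableSet_Ioo hfle1
    have h2 : ∫ u in Set.Ioo (0 : ℝ) t, f (2 * t - u) ≤
        Real.exp (2 * p * γ) * ∫ s in Set.Ioo (0 : ℝ) t, g s := by
      rw [← integral_const_mul]
      calc ∫ u in Set.Ioo (0 : ℝ) t, f (2 * t - u)
          = ∫ u in Set.Ioo (0 : ℝ) t, F2 u := setIntegral_congr_fun measurableSet_Ioo hf2eq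
        _ ≤ ∫ u in Set.Ioo (0 : ℝ) t, Real.exp (2 * p * γ) * g u :=
            setIntegral_mono_on hF2int (hgint.const_mul _) measurableSet_Ioo hf2le
    linarith
  calc (∫ s, f s) ^ (1 / p)
      ≤ ((1 + Real.exp (2 * p * γ)) * ∫ s in Set.Ioo (0 : ℝ) t, g s) ^ (1 / p) :=
        Real.rpow_le_rpow (integral_nonneg hfnn) hineq (by positivity)
    _ = (1 + Real.exp (2 * p * γ)) ^ (1 / p) *
          (∫ s in Set.Ioo (0 : ℝ) t, g s) ^ (1 / p) :=
        Real.mul_rpow (by positivity) hrhsnn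
end
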